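/- arXiv:0809.1493 — 7 statements merged into one kernel-verified Lean document; each statement's English description precedes it below -/
import Mathlib

section
/- For every η : V → ℝ with η_v > 0 for all v ∈ V and Σ_{v ∈ V} d_v² η_v ≤ 1, one has (Σ_{v ∈ V} d_v N_v)² ≤ Σ_{w ∈ V} (Σ_{v ∈ A(w)} η_v^{-1}) b_w². -/
open Finset

/-- Cauchy–Schwarz bound for the structured norm: for any `η > 0` with
`∑ d_v² η_v ≤ 1`, we have `(∑_v d_v ‖β_{D(v)}‖)² ≤ ∑_w (∑_{v ∈ A(w)} η_v⁻¹) ‖β_w‖²`. -/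
theorem stmt1 {V : Type*} [Fintype V] [PartialOrder V]
    [DecidableRel ((· ≤ ·) : V → V → Prop)]
    (d : V → ℝ) (hd : ∀ v, 0 < d v)
    (b : V → ℝ) (hb : ∀ w, 0 ≤ b w)
    (N : V → ℝ)
    (hN : ∀ v, N v = Real.sqrt (∑ w ∈ univ.filter (fun w => v ≤ w), (b w) ^ 2))
    (η : V → ℝ) (hη : ∀ v, 0 < η v)
    (hsum : ∑ v, (d v) ^ 2 * η v ≤ 1) :
    (∑ v, d v * N v) ^ 2 ≤
      ∑ w, (∑ v ∈ univ.filter (fun v => v ≤ w), (η v)⁻¹) * (b w) ^ 2 := by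
  have hηne : ∀ v, η v ≠ 0 := fun v => (hη v).ne'
  have key : ∀ v, d v * N v = (d v * Real.sqrt (η v)) * (N v / Real.sqrt (η v)) := by
    intro v
    have hs : Real.sqrt (η v) ≠ 0 := ne_of_gt (Real.sqrt_pos.mpr (hη v))
    field_simp
  have CS := Finset.sum_mul_sq_le_sq_mul_sq univ
    (fun v => d v * Real.sqrt (η v)) (fun v => N v / Real.sqrt (η v))
  have h1 : (∑ v, d v * N v) ^ 2 ≤
      (∑ v, (d v) ^ 2 * η v) * (∑ v, (N v) ^ 2 / η v) := by
    calc (∑ v, d v * N v) ^ 2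
        = (∑ v, (d v * Real.sqrt (η v)) * (N v / Real.sqrt (η v))) ^ 2 := by
          congr 1; exact Finset.sum_congr rfl fun v _ => key v
      _ ≤ (∑ v, (d v * Real.sqrt (η v)) ^ 2) * (∑ v, (N v / Real.sqrt (η v)) ^ 2) := CS
      _ = (∑ v, (d v) ^ 2 * η v) * (∑ v, (N v) ^ 2 / η v) := by
          congr 1 <;> refine Finset.sum_congr rfl fun v _ => ?_
          · rw [mul_pow, Real.sq_sqrt (hη v).le]
          · rw [div_pow, Real.sq_sqrt (hη v).le]
  have h2 : ∑ v, (N v) ^ 2 / η v =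
      ∑ w, (∑ v ∈ univ.filter (fun v => v ≤ w), (η v)⁻¹) * (b w) ^ 2 := by
    have hNsq : ∀ v, (N v) ^ 2 = ∑ w ∈ univ.filter (fun w => v ≤ w), (b w) ^ 2 := by
      intro v
      rw [hN v, Real.sq_sqrt]
      exact Finset.sum_nonneg fun w _ => sq_nonneg _
    calc ∑ v, (N v) ^ 2 / η v
        = ∑ v, ∑ w ∈ univ.filter (fun w => v ≤ w), (η v)⁻¹ * (b w) ^ 2 := by
          refine Finset.sum_congr rfl fun v _ => ?_
          rw [hNsq v, div_eq_inv_mul, Finset.mul_sum]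
      _ = ∑ v, ∑ w, if v ≤ w then (η v)⁻¹ * (b w) ^ 2 else 0 := by
          refine Finset.sum_congr rfl fun v _ => ?_
          rw [Finset.sum_filter]
      _ = ∑ w, ∑ v, if v ≤ w then (η v)⁻¹ * (b w) ^ 2 else 0 := Finset.sum_comm
      _ = ∑ w, (∑ v ∈ univ.filter (fun v => v ≤ w), (η v)⁻¹) * (b w) ^ 2 := by
          refine Finset.sum_congr rfl fun w _ => ?_
          rw [Finset.sum_mul, Finset.sum_filter]
  calc (∑ v, d v * N v) ^ 2
      ≤ (∑ v, (d v) ^ 2 * η v) * (∑ v, (N v) ^ 2 / η v) := h1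
    _ ≤ 1 * (∑ v, (N v) ^ 2 / η v) := by
        refine mul_le_mul_of_nonneg_right hsum ?_
        exact Finset.sum_nonneg fun v _ => div_nonneg (sq_nonneg _) (hη v).le
    _ = ∑ w, (∑ v ∈ univ.filter (fun v => v ≤ w), (η v)⁻¹) * (b w) ^ 2 := by
        rw [one_mul, h2]
end

section
/- Let c : V → ℝ be nonnegative (c_w represents the quadratic form αᵀ K_w α). Then the following minimax duality holds with no duality gap: inf over κ : V × V → ℝ satisfying Σ_{v ∈ A(w)} κ_{v w} = 1 for every w ∈ V, of max_{v ∈ V} d_v^{-2} Σ_{w ∈ D(v)} κ_{v w}² c_w, is equal to sup over η : V → ℝ with η_v > 0 for all v and Σ_{v ∈ V} d_v² η_v ≤ 1, of Σ_{w ∈ V} (Σ_{v ∈ A(w)} η_v^{-1})^{-1} c_w. (This is Proposition 2 of the paper's appendix, stated for the quadratic forms c_w = αᵀ K_w α.) -/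
open Finset

/-- Interchanging a double sum over pairs `v ≤ w`. -/
lemma sum_swap_filter_le {V : Type*} [Fintype V] [PartialOrder V]
    [DecidableRel ((· ≤ ·) : V → V → Prop)] (g : V → V → ℝ) :
    ∑ w : V, ∑ v ∈ univ.filter (fun v => v ≤ w), g v w
      = ∑ v : V, ∑ w ∈ univ.filter (fun w => v ≤ w), g v w := by
  simp_rw [Finset.sum_filter]
  exact Finset.sum_comm

/-- Lagrange multipliers for `min max` of finitely many convex functions,
via Hahn-Banach separation in the value space. -/
theorem minimax_lambda {ι : Type*} [Fintype ι] [Nonempty ι] [DecidableEq ι]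
    {E : Type*} [AddCommGroup E] [Module ℝ E]
    (P : Set E) (hP : Convex ℝ P) (x0 : E) (hx0 : x0 ∈ P)
    (f : ι → E → ℝ) (hf : ∀ i, ConvexOn ℝ P (f i)) (M : ℝ)
    (hM : ∀ x ∈ P, ∃ i, M ≤ f i x) :
    ∃ l : ι → ℝ, (∀ i, 0 ≤ l i) ∧ (∑ i, l i = 1) ∧
      ∀ x ∈ P, M ≤ ∑ i, l i * f i x := by
  classical
  set S : Set (ι → ℝ) := {y | ∃ x ∈ P, ∀ i, f i x ≤ y i} with hS
  set T : Set (ι → ℝ) := {y | ∀ i, y i < M} with hT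
  have hTopen : IsOpen T := by
    have : T = Set.pi Set.univ (fun _ : ι => Set.Iio M) := by
      ext y; simp [hT, Set.mem_pi]
    rw [this]
    exact isOpen_set_pi Set.finite_univ (fun _ _ => isOpen_Iio)
  have hTconv : Convex ℝ T := by
    intro y hy z hz a b ha hb hab
    intro i
    have h1 := hy i; have h2 := hz i
    simp only [Pi.add_apply, Pi.smul_apply, smul_eq_mul]
    rcases eq_or_lt_of_le ha with h | h
    · have hb1 : b = 1 := by linarith
      rw [← h, hb1]; simpa using h2
    · have h3 : a * y i < a * M := mul_lt_mul_of_pos_left h1 h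
      have h4 : b * z i ≤ b * M := mul_le_mul_of_nonneg_left h2.le hb
      have h5 : a * M + b * M = M := by rw [← add_mul, hab, one_mul]
      linarith
  have hSconv : Convex ℝ S := by
    rintro y ⟨x, hx, hxy⟩ z ⟨x', hx', hxz⟩ a b ha hb hab
    refine ⟨a • x + b • x', hP hx hx' ha hb hab, fun i => ?_⟩
    calc f i (a • x + b • x') ≤ a * f i x + b * f i x' :=
          (hf i).2 hx hx' ha hb hab
      _ ≤ a * y i + b * z i := by
          have := hxy i; have := hxz i
          gcongr
      _ = (a • y + b • z) i := by simp [smul_eq_mul]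
  have hdisj : Disjoint T S := by
    rw [Set.disjoint_left]
    rintro y hyT ⟨x, hx, hxy⟩
    obtain ⟨i, hi⟩ := hM x hx
    exact absurd (hi.trans (hxy i)) (not_le.mpr (hyT i))
  obtain ⟨φ, u, hφT, hφS⟩ := geometric_hahn_banach_open hTconv hTopen hSconv hdisj
  set e : ι → (ι → ℝ) := fun i => (fun j => if i = j then (1:ℝ) else 0) with he
  set l0 : ι → ℝ := fun i => φ (e i) with hl0
  have hφ_apply : ∀ y : ι → ℝ, φ y = ∑ i, y i * l0 i := by
    intro y
    conv_lhs => rw [pi_eq_sum_univ y]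
    rw [map_sum]
    exact Finset.sum_congr rfl fun i _ => by rw [map_smul]; simp [hl0, he, smul_eq_mul]
  -- a point of S
  set y0 : ι → ℝ := fun i => f i x0 with hy0
  have hy0S : y0 ∈ S := ⟨x0, hx0, fun i => le_rfl⟩
  have hu0 : u ≤ φ y0 := hφS y0 hy0S
  -- nonnegativity
  have hl0nn : ∀ i, 0 ≤ l0 i := by
    intro i
    by_contra hneg
    push_neg at hneg
    set t : ℝ := (u - φ y0 - 1) / l0 i with ht
    have htpos : 0 < t := div_pos_of_neg_of_neg (by linarith) hneg
    have hmem : y0 + t • e i ∈ S := by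
      refine ⟨x0, hx0, fun j => ?_⟩
      simp only [Pi.add_apply, Pi.smul_apply, smul_eq_mul, hy0, he]
      rcases eq_or_ne i j with rfl | hij
      · simp; nlinarith
      · simp [hij]
    have hkey := hφS _ hmem
    rw [map_add, map_smul, smul_eq_mul] at hkey
    have hli : φ (e i) = l0 i := rfl
    rw [hli] at hkey
    have htl : t * l0 i = u - φ y0 - 1 := by
      rw [ht, div_mul_cancel₀ _ hneg.ne]
    rw [htl] at hkey
    linarith
  -- positivity of the sum
  set s0 : ℝ := ∑ i, l0 i with hs0
  have hs0nn : 0 ≤ s0 := Finset.sum_nonneg fun i _ => hl0nn i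
  have hTmem : ∀ ε : ℝ, 0 < ε → ((fun _ => M - ε) : ι → ℝ) ∈ T := by
    intro ε hε i; simpa using hε
  have hTval : ∀ ε : ℝ, 0 < ε → (M - ε) * s0 < u := by
    intro ε hε
    have h := hφT _ (hTmem ε hε)
    rw [hφ_apply] at h
    calc (M - ε) * s0 = ∑ i, (M - ε) * l0 i := by rw [hs0, Finset.mul_sum]
      _ = ∑ i, (fun _ : ι => M - ε) i * l0 i := rfl
      _ < u := h
  have hs0pos : 0 < s0 := by
    rcases hs0nn.lt_or_eq with h | h
    · exact h
    · exfalso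
      have hall : ∀ i, l0 i = 0 := by
        intro i
        have := Finset.sum_eq_zero_iff_of_nonneg (fun i _ => hl0nn i) |>.mp h.symm
        exact this i (Finset.mem_univ i)
      have h1 : (M - 1) * s0 < u := hTval 1 one_pos
      have h2 : u ≤ φ y0 := hu0
      rw [hφ_apply] at h2
      simp [hall] at h2
      rw [← h] at h1
      simp at h1
      linarith
  have hMu : M * s0 ≤ u := by
    by_contra hlt
    push_neg at hlt
    have hε : 0 < (M * s0 - u) / (2 * s0) := div_pos (by linarith) (by linarith)
    have := hTval _ hε
    have : (M - (M * s0 - u) / (2 * s0)) * s0 = M * s0 - (M * s0 - u) / 2 := by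
      field_simp
    nlinarith [hTval _ hε]
  refine ⟨fun i => l0 i / s0, fun i => div_nonneg (hl0nn i) hs0nn, ?_, ?_⟩
  · rw [← Finset.sum_div, ← hs0, div_self hs0pos.ne']
  · intro x hx
    have hmem : (fun i => f i x) ∈ S := ⟨x, hx, fun i => le_rfl⟩
    have h1 : u ≤ ∑ i, f i x * l0 i := by
      have := hφS _ hmem
      rwa [hφ_apply] at this
    have : ∑ i, l0 i / s0 * f i x = (∑ i, f i x * l0 i) / s0 := by
      rw [Finset.sum_div]
      exact Finset.sum_congr rfl fun i _ => by ring
    rw [this, le_div_iff₀ hs0pos]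
    calc M * s0 ≤ u := hMu
      _ ≤ _ := h1

/-- Proposition 2 of the appendix (minimax duality with no duality gap):
`inf_{κ ∈ L} max_{v ∈ V} d_v⁻² ∑_{w ∈ D(v)} κ_{vw}² c_w
  = sup_{η ∈ H} ∑_{w ∈ V} (∑_{v ∈ A(w)} η_v⁻¹)⁻¹ c_w`,
where `L = {κ : ∀ w, ∑_{v ∈ A(w)} κ_{vw} = 1}` and
`H = {η > 0 : ∑_v d_v² η_v ≤ 1}`, and `c_w = αᵀ K_w α ≥ 0`. -/
theorem stmt6 {V : Type*} [Fintype V] [Nonempty V] [PartialOrder V]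
    [DecidableRel ((· ≤ ·) : V → V → Prop)]
    (d : V → ℝ) (hd : ∀ v, 0 < d v)
    (c : V → ℝ) (hc : ∀ w, 0 ≤ c w) :
    sInf {s : ℝ | ∃ κ : V → V → ℝ,
        (∀ w, ∑ v ∈ univ.filter (fun v => v ≤ w), κ v w = 1) ∧
        s = (univ : Finset V).sup' univ_nonempty
          (fun v => ((d v) ^ 2)⁻¹ *
            ∑ w ∈ univ.filter (fun w => v ≤ w), (κ v w) ^ 2 * c w)} =
    sSup {s : ℝ | ∃ η : V → ℝ, (∀ v, 0 < η v) ∧ (∑ v, (d v) ^ 2 * η v ≤ 1) ∧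
        s = ∑ w, (∑ v ∈ univ.filter (fun v => v ≤ w), (η v)⁻¹)⁻¹ * c w} := by
  classical
  set A : V → Finset V := fun w => univ.filter (fun v => v ≤ w) with hA
  set Dv : V → Finset V := fun v => univ.filter (fun w => v ≤ w) with hDv
  set fv : V → (V → V → ℝ) → ℝ := fun v κ =>
    ((d v) ^ 2)⁻¹ * ∑ w ∈ Dv v, (κ v w) ^ 2 * c w with hfv
  set F : (V → V → ℝ) → ℝ :=
    fun κ => (univ : Finset V).sup' univ_nonempty (fun v => fv v κ) with hF
  set P : Set (V → V → ℝ) := {κ | ∀ w, ∑ v ∈ A w, κ v w = 1} with hP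
  set G : (V → ℝ) → ℝ := fun η => ∑ w, (∑ v ∈ A w, (η v)⁻¹)⁻¹ * c w with hG
  have hfv_eq : ∀ v κ, fv v κ = ((d v) ^ 2)⁻¹ * ∑ w ∈ Dv v, (κ v w) ^ 2 * c w :=
    fun _ _ => rfl
  have hG_eq : ∀ η : V → ℝ, G η = ∑ w, (∑ v ∈ A w, (η v)⁻¹)⁻¹ * c w :=
    fun _ => rfl
  show sInf {s : ℝ | ∃ κ, κ ∈ P ∧ s = F κ}
      = sSup {s : ℝ | ∃ η : V → ℝ, (∀ v, 0 < η v) ∧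
          (∑ v, (d v) ^ 2 * η v ≤ 1) ∧ s = G η}
  set L : Set ℝ := {s : ℝ | ∃ κ, κ ∈ P ∧ s = F κ} with hL
  set R : Set ℝ := {s : ℝ | ∃ η : V → ℝ, (∀ v, 0 < η v) ∧
      (∑ v, (d v) ^ 2 * η v ≤ 1) ∧ s = G η} with hR
  -- basic facts
  have hwA : ∀ w : V, w ∈ A w := fun w => by simp [hA]
  have hAne : ∀ w : V, (A w).Nonempty := fun w => ⟨w, hwA w⟩
  have hd2 : ∀ v : V, (0:ℝ) < (d v) ^ 2 := fun v => pow_pos (hd v) 2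
  have hfv0 : ∀ v κ, 0 ≤ fv v κ := fun v κ =>
    mul_nonneg (inv_nonneg.mpr (sq_nonneg _))
      (Finset.sum_nonneg fun w _ => mul_nonneg (sq_nonneg _) (hc w))
  have hF0 : ∀ κ, 0 ≤ F κ := fun κ =>
    le_trans (hfv0 (Classical.arbitrary V) κ)
      (Finset.le_sup' (fun v => fv v κ) (Finset.mem_univ _))
  have hκ0 : (fun v w => if v = w then (1:ℝ) else 0) ∈ P := by
    intro w
    rw [Finset.sum_ite_eq' (A w) w (fun _ => (1:ℝ))]
    simp [hwA w]
  have hLne : L.Nonempty := ⟨_, _, hκ0, rfl⟩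
  have hLlb : ∀ s ∈ L, (0:ℝ) ≤ s := by
    rintro s ⟨κ, hκ, rfl⟩; exact hF0 κ
  have hLbdd : BddBelow L := ⟨0, hLlb⟩
  set M : ℝ := sInf L with hM
  have hM0 : 0 ≤ M := le_csInf hLne hLlb
  have hMle : ∀ κ ∈ P, M ≤ F κ := fun κ hκ => csInf_le hLbdd ⟨κ, hκ, rfl⟩
  -- weak duality
  have hweak : ∀ η : V → ℝ, (∀ v, 0 < η v) → (∑ v, (d v) ^ 2 * η v ≤ 1) →
      ∀ κ ∈ P, G η ≤ F κ := by
    intro η hη hη1 κ hκ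
    have hstep : ∀ w, (∑ v ∈ A w, (η v)⁻¹)⁻¹ * c w
        ≤ (∑ v ∈ A w, η v * (κ v w) ^ 2) * c w := by
      intro w
      have hS : 0 < ∑ v ∈ A w, (η v)⁻¹ :=
        Finset.sum_pos (fun v _ => inv_pos.mpr (hη v)) (hAne w)
      have hCS : (1:ℝ) ≤ (∑ v ∈ A w, (η v)⁻¹) * (∑ v ∈ A w, η v * (κ v w) ^ 2) := by
        have h := sum_sq_le_sum_mul_sum_of_sq_eq_mul (A w)
          (r := fun v => κ v w) (f := fun v => (η v)⁻¹) (g := fun v => η v * (κ v w) ^ 2)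
          (fun v _ => (inv_pos.mpr (hη v)).le)
          (fun v _ => mul_nonneg (hη v).le (sq_nonneg _))
          (fun v _ => by
            rw [← mul_assoc, inv_mul_cancel₀ (hη v).ne', one_mul])
        rwa [hκ w, one_pow] at h
      have h2 : (∑ v ∈ A w, (η v)⁻¹)⁻¹ ≤ ∑ v ∈ A w, η v * (κ v w) ^ 2 := by
        rw [mul_comm] at hCS
        rw [inv_eq_one_div]
        exact (div_le_iff₀ hS).mpr hCS
      exact mul_le_mul_of_nonneg_right h2 (hc w)
    calc G η = ∑ w, (∑ v ∈ A w, (η v)⁻¹)⁻¹ * c w := rfl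
      _ ≤ ∑ w, (∑ v ∈ A w, η v * (κ v w) ^ 2) * c w :=
          Finset.sum_le_sum fun w _ => hstep w
      _ = ∑ w, ∑ v ∈ A w, η v * (κ v w) ^ 2 * c w := by
          refine Finset.sum_congr rfl fun w _ => ?_
          rw [Finset.sum_mul]
      _ = ∑ v, ∑ w ∈ Dv v, η v * (κ v w) ^ 2 * c w :=
          sum_swap_filter_le (fun v w => η v * (κ v w) ^ 2 * c w)
      _ = ∑ v, ((d v) ^ 2 * η v) * fv v κ := by
          refine Finset.sum_congr rfl fun v _ => ?_
          have h1 : ((d v) ^ 2 * η v) * fv v κ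
              = η v * ∑ w ∈ Dv v, (κ v w) ^ 2 * c w := by
            rw [hfv_eq]
            have hdv : (d v) ^ 2 ≠ 0 := (hd2 v).ne'
            rw [mul_comm ((d v) ^ 2) (η v), mul_assoc, ← mul_assoc ((d v) ^ 2),
              mul_inv_cancel₀ hdv, one_mul]
          rw [h1, Finset.mul_sum]
          exact Finset.sum_congr rfl fun w _ => by ring
      _ ≤ ∑ v, ((d v) ^ 2 * η v) * F κ := by
          refine Finset.sum_le_sum fun v _ => ?_
          refine mul_le_mul_of_nonneg_left ?_ (mul_nonneg (sq_nonneg _) (hη v).le)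
          exact Finset.le_sup' (fun v => fv v κ) (Finset.mem_univ v)
      _ = (∑ v, (d v) ^ 2 * η v) * F κ := by rw [Finset.sum_mul]
      _ ≤ 1 * F κ := mul_le_mul_of_nonneg_right hη1 (hF0 κ)
      _ = F κ := one_mul _
  have hRub : ∀ r ∈ R, r ≤ M := by
    rintro r ⟨η, hη, hη1, rfl⟩
    refine le_csInf hLne ?_
    rintro s ⟨κ, hκ, rfl⟩
    exact hweak η hη hη1 κ hκ
  have hRbdd : BddAbove R := ⟨M, hRub⟩
  set D : ℝ := ∑ v, (d v) ^ 2 with hD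
  have hDpos : 0 < D := Finset.sum_pos (fun v _ => hd2 v) univ_nonempty
  have hη0 : (fun _ : V => D⁻¹) ∈ {η : V → ℝ | (∀ v, 0 < η v) ∧
      (∑ v, (d v) ^ 2 * η v ≤ 1)} := by
    constructor
    · intro v; exact inv_pos.mpr hDpos
    · rw [← Finset.sum_mul, ← hD, mul_inv_cancel₀ hDpos.ne']
  have hRne : R.Nonempty := ⟨G (fun _ => D⁻¹), ⟨fun _ => D⁻¹, hη0.1, hη0.2, rfl⟩⟩
  have hsup_le : sSup R ≤ M := csSup_le hRne hRub
  -- convexity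
  have hPconv : Convex ℝ P := by
    intro κ1 h1 κ2 h2 a b ha hb hab
    intro w
    have heq : ∑ v ∈ A w, (a • κ1 + b • κ2) v w
        = a * ∑ v ∈ A w, κ1 v w + b * ∑ v ∈ A w, κ2 v w := by
      rw [Finset.mul_sum, Finset.mul_sum, ← Finset.sum_add_distrib]
      refine Finset.sum_congr rfl fun v _ => ?_
      simp [smul_eq_mul]
    rw [heq, h1 w, h2 w, mul_one, mul_one, hab]
  have hfvconv : ∀ v, ConvexOn ℝ P (fv v) := by
    intro v
    refine ⟨hPconv, ?_⟩
    intro x hx y hy a b ha hb hab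
    show fv v (a • x + b • y) ≤ a * fv v x + b * fv v y
    have hpt : ∀ w ∈ Dv v, ((a • x + b • y) v w) ^ 2 * c w
        ≤ (a * (x v w) ^ 2 + b * (y v w) ^ 2) * c w := by
      intro w _
      have h1 : ((a • x + b • y) v w) = a * x v w + b * y v w := by
        simp [smul_eq_mul]
      rw [h1]
      have h2 : (a * x v w + b * y v w) ^ 2 ≤ a * (x v w) ^ 2 + b * (y v w) ^ 2 := by
        nlinarith [mul_nonneg (mul_nonneg ha hb) (sq_nonneg (x v w - y v w)),
          sq_nonneg (x v w - y v w)]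
      exact mul_le_mul_of_nonneg_right h2 (hc w)
    have hsplit : ∑ w ∈ Dv v, (a * (x v w) ^ 2 + b * (y v w) ^ 2) * c w
        = a * ∑ w ∈ Dv v, (x v w) ^ 2 * c w + b * ∑ w ∈ Dv v, (y v w) ^ 2 * c w := by
      rw [Finset.mul_sum, Finset.mul_sum, ← Finset.sum_add_distrib]
      exact Finset.sum_congr rfl fun w _ => by ring
    calc fv v (a • x + b • y)
        = ((d v) ^ 2)⁻¹ * ∑ w ∈ Dv v, ((a • x + b • y) v w) ^ 2 * c w := rfl
      _ ≤ ((d v) ^ 2)⁻¹ * ∑ w ∈ Dv v, (a * (x v w) ^ 2 + b * (y v w) ^ 2) * c w :=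
          mul_le_mul_of_nonneg_left (Finset.sum_le_sum hpt) (by positivity)
      _ = a * fv v x + b * fv v y := by
          rw [hsplit]
          show _ = a * (((d v) ^ 2)⁻¹ * _) + b * (((d v) ^ 2)⁻¹ * _)
          ring
  have hMmax : ∀ κ ∈ P, ∃ v, M ≤ fv v κ := by
    intro κ hκ
    obtain ⟨v, _, hv⟩ := Finset.exists_mem_eq_sup' univ_nonempty (fun v => fv v κ)
    exact ⟨v, hv ▸ hMle κ hκ⟩
  obtain ⟨l, hl0, hl1, hlM⟩ :=
    minimax_lambda P hPconv _ hκ0 fv hfvconv M hMmax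
  -- construct dual variables
  set a : V → ℝ := fun v => l v * ((d v) ^ 2)⁻¹ with ha
  have hann : ∀ v, 0 ≤ a v := fun v =>
    mul_nonneg (hl0 v) (inv_nonneg.mpr (sq_nonneg _))
  have hda : ∑ v, (d v) ^ 2 * a v = 1 := by
    rw [← hl1]
    refine Finset.sum_congr rfl fun v _ => ?_
    have : a v = l v * ((d v) ^ 2)⁻¹ := rfl
    rw [this, ← mul_assoc, mul_comm ((d v) ^ 2) (l v), mul_assoc,
      mul_inv_cancel₀ (hd2 v).ne', mul_one]
  -- the optimal kappa
  set Q : V → Prop := fun w => ∃ u ∈ A w, a u = 0 with hQ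
  have hzex : ∀ w, ∃ u, Q w → (u ∈ A w ∧ a u = 0) := by
    intro w
    by_cases h : Q w
    · obtain ⟨u, hu, hu0⟩ := h
      exact ⟨u, fun _ => ⟨hu, hu0⟩⟩
    · exact ⟨w, fun h' => absurd h' h⟩
  choose z hzspec using hzex
  set κs : V → V → ℝ := fun v w =>
    if Q w then (if v = z w then 1 else 0)
    else (a v)⁻¹ / (∑ u ∈ A w, (a u)⁻¹) with hκs
  have hκs_eq : ∀ v w, κs v w = if Q w then (if v = z w then 1 else 0)
      else (a v)⁻¹ / (∑ u ∈ A w, (a u)⁻¹) := fun _ _ => rfl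
  have hposn : ∀ w, ¬ Q w → ∀ u ∈ A w, 0 < a u := by
    intro w h u hu
    rcases (hann u).lt_or_eq with h' | h'
    · exact h'
    · exact absurd ⟨u, hu, h'.symm⟩ h
  have hκsP : κs ∈ P := by
    intro w
    by_cases h : Q w
    · have heq : ∀ v, κs v w = if v = z w then 1 else 0 := by
        intro v; rw [hκs_eq, if_pos h]
      rw [Finset.sum_congr rfl fun v _ => heq v]
      rw [Finset.sum_ite_eq' (A w) (z w) (fun _ => (1:ℝ))]
      simp [(hzspec w h).1]
    · have hS : 0 < ∑ u ∈ A w, (a u)⁻¹ :=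
        Finset.sum_pos (fun u hu => inv_pos.mpr (hposn w h u hu)) (hAne w)
      have heq : ∀ v, κs v w = (a v)⁻¹ / (∑ u ∈ A w, (a u)⁻¹) := by
        intro v; rw [hκs_eq, if_neg h]
      rw [Finset.sum_congr rfl fun v _ => heq v, ← Finset.sum_div, div_self hS.ne']
  -- key per-w bound
  have hkey : ∀ ε : ℝ, 0 < ε → ∀ w,
      ∑ v ∈ A w, a v * (κs v w) ^ 2 ≤ (∑ v ∈ A w, (a v + ε)⁻¹)⁻¹ := by
    intro ε hε w
    have hTpos : 0 < ∑ v ∈ A w, (a v + ε)⁻¹ :=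
      Finset.sum_pos (fun v _ => inv_pos.mpr (by linarith [hann v])) (hAne w)
    by_cases h : Q w
    · have hzero : ∑ v ∈ A w, a v * (κs v w) ^ 2 = 0 := by
        refine Finset.sum_eq_zero fun v _ => ?_
        have hv : κs v w = if v = z w then 1 else 0 := by
          rw [hκs_eq, if_pos h]
        rw [hv]
        by_cases hv' : v = z w
        · rw [if_pos hv', hv', (hzspec w h).2]; ring
        · rw [if_neg hv']; ring
      rw [hzero]
      exact inv_nonneg.mpr hTpos.le
    · have hpos := hposn w h
      have hS : 0 < ∑ u ∈ A w, (a u)⁻¹ :=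
        Finset.sum_pos (fun u hu => inv_pos.mpr (hpos u hu)) (hAne w)
      have hval : ∑ v ∈ A w, a v * (κs v w) ^ 2 = (∑ u ∈ A w, (a u)⁻¹)⁻¹ := by
        have he : ∀ v ∈ A w, a v * (κs v w) ^ 2
            = (a v)⁻¹ / (∑ u ∈ A w, (a u)⁻¹) ^ 2 := by
          intro v hv
          have hvv : κs v w = (a v)⁻¹ / (∑ u ∈ A w, (a u)⁻¹) := by
            rw [hκs_eq, if_neg h]
          have hav : a v ≠ 0 := (hpos v hv).ne'
          rw [hvv, div_pow, ← mul_div_assoc, sq ((a v)⁻¹), ← mul_assoc,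
            mul_inv_cancel₀ hav, one_mul]
        rw [Finset.sum_congr rfl he, ← Finset.sum_div, sq]
        rw [div_mul_eq_div_div]
        rw [div_self hS.ne', one_div]
      rw [hval]
      have hTS : ∑ v ∈ A w, (a v + ε)⁻¹ ≤ ∑ u ∈ A w, (a u)⁻¹ := by
        refine Finset.sum_le_sum fun v hv => ?_
        exact inv_anti₀ (hpos v hv) (by linarith)
      exact inv_anti₀ hTpos hTS
  -- M is bounded by the regularized dual value
  have hMbound : ∀ ε : ℝ, 0 < ε →
      M ≤ ∑ w, (∑ v ∈ A w, (a v + ε)⁻¹)⁻¹ * c w := by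
    intro ε hε
    have h1 : M ≤ ∑ v, l v * fv v κs := hlM κs hκsP
    have h2 : ∑ v, l v * fv v κs
        = ∑ w, (∑ v ∈ A w, a v * (κs v w) ^ 2) * c w := by
      have e1 : ∀ v, l v * fv v κs = ∑ w ∈ Dv v, a v * (κs v w) ^ 2 * c w := by
        intro v
        rw [hfv_eq, ← mul_assoc, Finset.mul_sum]
        refine Finset.sum_congr rfl fun w _ => ?_
        have : a v = l v * ((d v) ^ 2)⁻¹ := rfl
        rw [this]; ring
      rw [Finset.sum_congr rfl fun v _ => e1 v]
      rw [← sum_swap_filter_le (fun v w => a v * (κs v w) ^ 2 * c w)]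
      exact Finset.sum_congr rfl fun w _ => by rw [Finset.sum_mul]
    have h3 : ∑ w, (∑ v ∈ A w, a v * (κs v w) ^ 2) * c w
        ≤ ∑ w, (∑ v ∈ A w, (a v + ε)⁻¹)⁻¹ * c w :=
      Finset.sum_le_sum fun w _ => mul_le_mul_of_nonneg_right (hkey ε hε w) (hc w)
    linarith [h2 ▸ h1]
  -- feed regularized eta into the sup
  have hεsup : ∀ ε : ℝ, 0 < ε → (1 + ε * D)⁻¹ * M ≤ sSup R := by
    intro ε hε
    have h1pos : 0 < 1 + ε * D := by nlinarith
    set t : ℝ := (1 + ε * D)⁻¹ with htdef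
    have ht : 0 < t := inv_pos.mpr h1pos
    set η : V → ℝ := fun v => t * (a v + ε) with hη
    have hηpos : ∀ v, 0 < η v := fun v => mul_pos ht (by linarith [hann v])
    have hηsum : ∑ v, (d v) ^ 2 * η v ≤ 1 := by
      have heq : ∑ v, (d v) ^ 2 * η v = t * (1 + ε * D) := by
        calc ∑ v, (d v) ^ 2 * η v = t * ∑ v, ((d v) ^ 2 * a v + (d v) ^ 2 * ε) := by
              rw [Finset.mul_sum]
              refine Finset.sum_congr rfl fun v _ => ?_
              have : η v = t * (a v + ε) := rfl
              rw [this]; ring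
          _ = t * (∑ v, (d v) ^ 2 * a v + (∑ v, (d v) ^ 2) * ε) := by
              rw [Finset.sum_add_distrib, Finset.sum_mul]
          _ = t * (1 + ε * D) := by rw [hda, ← hD]; ring
      rw [heq, inv_mul_cancel₀ h1pos.ne']
    have hGη : G η = t * ∑ w, (∑ v ∈ A w, (a v + ε)⁻¹)⁻¹ * c w := by
      rw [hG_eq, Finset.mul_sum]
      refine Finset.sum_congr rfl fun w _ => ?_
      have heq : ∑ v ∈ A w, (η v)⁻¹ = t⁻¹ * ∑ v ∈ A w, (a v + ε)⁻¹ := by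
        rw [Finset.mul_sum]
        refine Finset.sum_congr rfl fun v _ => ?_
        have : η v = t * (a v + ε) := rfl
        rw [this, mul_inv]
      rw [heq, mul_inv, inv_inv, mul_assoc]
    have hmem : G η ∈ R := ⟨η, hηpos, hηsum, rfl⟩
    have hfin : t * M ≤ G η := by
      rw [hGη]
      exact mul_le_mul_of_nonneg_left (hMbound ε hε) ht.le
    exact hfin.trans (le_csSup hRbdd hmem)
  -- conclude
  have hle : M ≤ sSup R := by
    by_contra hcon
    push_neg at hcon
    have hG0 : ∀ η : V → ℝ, (∀ v, 0 < η v) → 0 ≤ G η := by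
      intro η hη
      rw [hG_eq]
      refine Finset.sum_nonneg fun w _ => mul_nonneg ?_ (hc w)
      exact inv_nonneg.mpr (Finset.sum_nonneg fun v _ => inv_nonneg.mpr (hη v).le)
    have hq0 : 0 ≤ sSup R :=
      le_trans (hG0 (fun _ => D⁻¹) hη0.1)
        (le_csSup hRbdd ⟨fun _ => D⁻¹, hη0.1, hη0.2, rfl⟩)
    set q : ℝ := sSup R with hq
    have hMq : 0 < M - q := by linarith
    set ε : ℝ := (M - q) / (D * (q + 1)) with hε
    have hεpos : 0 < ε := div_pos hMq (by positivity)
    have h1 := hεsup ε hεpos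
    have hεD : ε * D = (M - q) / (q + 1) := by
      rw [hε]; field_simp
    have h1pos : 0 < 1 + ε * D := by nlinarith
    have h3 : M ≤ (1 + ε * D) * q := by
      rw [← inv_mul_le_iff₀ h1pos]
      exact h1
    have h2 : (1 + ε * D) * q < M := by
      rw [hεD]
      have hlt : (M - q) / (q + 1) * q < M - q := by
        rw [div_mul_eq_mul_div, div_lt_iff₀ (by linarith)]
        nlinarith
      nlinarith
    linarith
  exact le_antisymm hle hsup_le
end

section
/- Let c : V → ℝ be nonnegative, and let J ⊆ V be a lower set (v ⪯ w and w ∈ J imply v ∈ J, so that the complement Jᶜ is closed under taking descendants) with Jᶜ nonempty. Then for every κ : V × V → ℝ satisfying, for each w ∈ Jᶜ, Σ_{v ∈ A(w) ∩ Jᶜ} κ_{v w} = 1, one has max_{v ∈ Jᶜ} d_v^{-2} Σ_{w ∈ D(v)} κ_{v w}² c_w ≥ max_{w ∈ Jᶜ} c_w / (Σ_{v ∈ A(w) ∩ Jᶜ} d_v)². (This lower bound is the core of the necessary optimality condition (N_J), Proposition 2 of the paper, with c_w = αᵀ K_w α.) -/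
open Finset

/-- Lower bound underlying the necessary optimality condition `(N_J)`:
if `J` is a lower set with `Jᶜ` nonempty and `κ` satisfies
`∑_{v ∈ A(w) ∩ Jᶜ} κ_{vw} = 1` for each `w ∈ Jᶜ`, then
`max_{v ∈ Jᶜ} d_v⁻² ∑_{w ∈ D(v)} κ_{vw}² c_w ≥
  max_{w ∈ Jᶜ} c_w / (∑_{v ∈ A(w) ∩ Jᶜ} d_v)²`. -/
theorem stmt7 {V : Type*} [Fintype V] [PartialOrder V] [DecidableEq V]
    [DecidableRel ((· ≤ ·) : V → V → Prop)]
    (d : V → ℝ) (hd : ∀ v, 0 < d v)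
    (c : V → ℝ) (hc : ∀ w, 0 ≤ c w)
    (J : Finset V) (hJ : ∀ v w : V, v ≤ w → w ∈ J → v ∈ J)
    (hne : (Jᶜ : Finset V).Nonempty)
    (κ : V → V → ℝ)
    (hκ : ∀ w ∈ (Jᶜ : Finset V), ∑ v ∈ Jᶜ.filter (fun v => v ≤ w), κ v w = 1) :
    (Jᶜ : Finset V).sup' hne
        (fun w => c w / (∑ v ∈ Jᶜ.filter (fun v => v ≤ w), d v) ^ 2) ≤
    (Jᶜ : Finset V).sup' hne
        (fun v => ((d v) ^ 2)⁻¹ *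
          ∑ w ∈ univ.filter (fun w => v ≤ w), (κ v w) ^ 2 * c w) := by
  set M := (Jᶜ : Finset V).sup' hne
      (fun v => ((d v) ^ 2)⁻¹ *
        ∑ w ∈ univ.filter (fun w => v ≤ w), (κ v w) ^ 2 * c w) with hM
  rw [Finset.sup'_le_iff]
  intro w hw
  -- M is nonnegative
  obtain ⟨v0, hv0⟩ := hne
  have hM0 : 0 ≤ M := by
    refine le_trans ?_ (Finset.le_sup' (f := fun v => ((d v) ^ 2)⁻¹ *
      ∑ w ∈ univ.filter (fun w => v ≤ w), (κ v w) ^ 2 * c w) hv0)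
    exact mul_nonneg (by positivity)
      (Finset.sum_nonneg fun i _ => mul_nonneg (sq_nonneg _) (hc i))
  -- S = sum of d over ancestors in Jᶜ
  set S := ∑ v ∈ Jᶜ.filter (fun v => v ≤ w), d v with hS
  have hwmem : w ∈ Jᶜ.filter (fun v => v ≤ w) := by
    simp [Finset.mem_filter, hw]
  have hSpos : 0 < S := by
    refine Finset.sum_pos' (fun v _ => (hd v).le) ⟨w, hwmem, hd w⟩
  -- key pointwise bound
  have key : ∀ v ∈ Jᶜ.filter (fun v => v ≤ w),
      (κ v w) ^ 2 * c w ≤ d v ^ 2 * M := by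
    intro v hv
    rw [Finset.mem_filter] at hv
    have h1 : ((d v) ^ 2)⁻¹ *
        ∑ w' ∈ univ.filter (fun w' => v ≤ w'), (κ v w') ^ 2 * c w' ≤ M :=
      Finset.le_sup' (f := fun v => ((d v) ^ 2)⁻¹ *
        ∑ w ∈ univ.filter (fun w => v ≤ w), (κ v w) ^ 2 * c w) hv.1
    have h2 : (κ v w) ^ 2 * c w ≤
        ∑ w' ∈ univ.filter (fun w' => v ≤ w'), (κ v w') ^ 2 * c w' := by
      refine Finset.single_le_sum (f := fun w' => (κ v w') ^ 2 * c w')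
        (fun i _ => mul_nonneg (sq_nonneg _) (hc i)) ?_
      simp [Finset.mem_filter, hv.2]
    have hdv2 : (0:ℝ) < d v ^ 2 := pow_pos (hd v) 2
    calc (κ v w) ^ 2 * c w ≤ _ := h2
      _ ≤ d v ^ 2 * M := by
          rw [← inv_mul_le_iff₀ hdv2]; exact h1
  -- take square roots
  have sqrt_key : ∀ v ∈ Jᶜ.filter (fun v => v ≤ w),
      |κ v w| * Real.sqrt (c w) ≤ d v * Real.sqrt M := by
    intro v hv
    have := Real.sqrt_le_sqrt (key v hv)
    rwa [Real.sqrt_mul (by positivity), Real.sqrt_mul (by positivity),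
      Real.sqrt_sq_eq_abs, Real.sqrt_sq (hd v).le] at this
  -- sum up
  have hsum : Real.sqrt (c w) ≤ S * Real.sqrt M := by
    calc Real.sqrt (c w) = (∑ v ∈ Jᶜ.filter (fun v => v ≤ w), κ v w) *
          Real.sqrt (c w) := by rw [hκ w hw, one_mul]
      _ = ∑ v ∈ Jᶜ.filter (fun v => v ≤ w), κ v w * Real.sqrt (c w) := by
          rw [Finset.sum_mul]
      _ ≤ ∑ v ∈ Jᶜ.filter (fun v => v ≤ w), |κ v w| * Real.sqrt (c w) := by
          refine Finset.sum_le_sum fun v _ => ?_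
          exact mul_le_mul_of_nonneg_right (le_abs_self _) (Real.sqrt_nonneg _)
      _ ≤ ∑ v ∈ Jᶜ.filter (fun v => v ≤ w), d v * Real.sqrt M :=
          Finset.sum_le_sum sqrt_key
      _ = S * Real.sqrt M := by rw [← Finset.sum_mul]
  -- conclude
  have hcw : c w ≤ S ^ 2 * M := by
    have h := mul_self_le_mul_self (Real.sqrt_nonneg (c w)) hsum
    rw [Real.mul_self_sqrt (hc w)] at h
    calc c w ≤ (S * Real.sqrt M) * (S * Real.sqrt M) := h
      _ = S ^ 2 * (Real.sqrt M * Real.sqrt M) := by ring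
      _ = S ^ 2 * M := by rw [Real.mul_self_sqrt hM0]
  rw [div_le_iff₀ (by positivity : (0:ℝ) < S ^ 2)]
  linarith [hcw]
end

section
/- Let c : V → ℝ be nonnegative, and let J ⊆ V be a lower set (v ⪯ w and w ∈ J imply v ∈ J, so that the complement Jᶜ is closed under taking descendants) with Jᶜ nonempty. Then for every v ∈ Jᶜ, Σ_{w ∈ D(v)} c_w / (Σ_{v' ∈ A(w) ∩ Jᶜ} d_{v'})² ≤ max over t ranging over the minimal elements of Jᶜ (the sources of the graph restricted to Jᶜ) of Σ_{w ∈ D(t)} c_w / (Σ_{v' ∈ A(w) ∩ D(t)} d_{v'})². (This upper bound is the core of the sufficient optimality condition (S_{J,ε}), Proposition 3 of the paper, with c_w = αᵀ K_w α.) -/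
open Finset

/-- Upper bound underlying the sufficient optimality condition `(S_{J,ε})`:
if `J` is a lower set with `Jᶜ` nonempty, then for every `v ∈ Jᶜ`,
`∑_{w ∈ D(v)} c_w / (∑_{v' ∈ A(w) ∩ Jᶜ} d_{v'})²` is at most the maximum, over
the minimal elements `t` of `Jᶜ` (the sources of the graph restricted to `Jᶜ`),
of `∑_{w ∈ D(t)} c_w / (∑_{v' ∈ A(w) ∩ D(t)} d_{v'})²`. -/
theorem stmt8 {V : Type*} [Fintype V] [PartialOrder V] [DecidableEq V]
    [DecidableRel ((· ≤ ·) : V → V → Prop)]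
    (d : V → ℝ) (hd : ∀ v, 0 < d v)
    (c : V → ℝ) (hc : ∀ w, 0 ≤ c w)
    (J : Finset V) (hJ : ∀ v w : V, v ≤ w → w ∈ J → v ∈ J)
    (hne : (Jᶜ : Finset V).Nonempty)
    (v : V) (hv : v ∈ (Jᶜ : Finset V)) :
    ∑ w ∈ univ.filter (fun w => v ≤ w),
        c w / (∑ v' ∈ Jᶜ.filter (fun v' => v' ≤ w), d v') ^ 2 ≤
    sSup {s : ℝ | ∃ t ∈ (Jᶜ : Finset V),
        (∀ t' ∈ (Jᶜ : Finset V), t' ≤ t → t' = t) ∧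
        s = ∑ w ∈ univ.filter (fun w => t ≤ w),
              c w / (∑ v' ∈ univ.filter (fun v' => v' ≤ w ∧ t ≤ v'), d v') ^ 2} := by
  -- Jᶜ is an upper set
  have hup : ∀ t w : V, t ≤ w → t ∈ (Jᶜ : Finset V) → w ∈ (Jᶜ : Finset V) := by
    intro t w htw ht
    simp only [Finset.mem_compl] at ht ⊢
    exact fun hw => ht (hJ t w htw hw)
  -- find a minimal element t of Jᶜ below v
  obtain ⟨t, ht, hmin⟩ := (Jᶜ.filter (fun t => t ≤ v)).exists_minimal
    ⟨v, by simp [hv]⟩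
  simp only [Finset.mem_filter] at ht
  have htmin : ∀ t' ∈ (Jᶜ : Finset V), t' ≤ t → t' = t := by
    intro t' ht' hle
    by_contra hne'
    exact hne' (le_antisymm hle (hmin (Finset.mem_filter.2 ⟨ht', hle.trans ht.2⟩) hle))
  set S := {s : ℝ | ∃ t ∈ (Jᶜ : Finset V),
        (∀ t' ∈ (Jᶜ : Finset V), t' ≤ t → t' = t) ∧
        s = ∑ w ∈ univ.filter (fun w => t ≤ w),
              c w / (∑ v' ∈ univ.filter (fun v' => v' ≤ w ∧ t ≤ v'), d v') ^ 2} with hS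
  have hmem : (∑ w ∈ univ.filter (fun w => t ≤ w),
      c w / (∑ v' ∈ univ.filter (fun v' => v' ≤ w ∧ t ≤ v'), d v') ^ 2) ∈ S :=
    ⟨t, ht.1, htmin, rfl⟩
  have hbdd : BddAbove S := by
    have hsub : S ⊆ (fun t : V => ∑ w ∈ univ.filter (fun w => t ≤ w),
        c w / (∑ v' ∈ univ.filter (fun v' => v' ≤ w ∧ t ≤ v'), d v') ^ 2) '' Set.univ := by
      rintro s ⟨t, _, _, rfl⟩
      exact ⟨t, Set.mem_univ _, rfl⟩
    exact ((Set.finite_univ.image _).subset hsub).bddAbove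
  refine le_trans ?_ (le_csSup hbdd hmem)
  -- now compare the two sums
  have hsub : univ.filter (fun w => v ≤ w) ⊆ univ.filter (fun w => t ≤ w) := by
    intro w hw
    simp only [Finset.mem_filter, Finset.mem_univ, true_and] at hw ⊢
    exact ht.2.trans hw
  calc ∑ w ∈ univ.filter (fun w => v ≤ w),
        c w / (∑ v' ∈ Jᶜ.filter (fun v' => v' ≤ w), d v') ^ 2
      ≤ ∑ w ∈ univ.filter (fun w => v ≤ w),
        c w / (∑ v' ∈ univ.filter (fun v' => v' ≤ w ∧ t ≤ v'), d v') ^ 2 := by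
        apply Finset.sum_le_sum
        intro w hw
        simp only [Finset.mem_filter, Finset.mem_univ, true_and] at hw
        have hden2pos : (0:ℝ) < ∑ v' ∈ univ.filter (fun v' => v' ≤ w ∧ t ≤ v'), d v' := by
          apply Finset.sum_pos (fun i _ => hd i)
          exact ⟨t, by simp [ht.2.trans hw]⟩
        have hsub2 : univ.filter (fun v' => v' ≤ w ∧ t ≤ v') ⊆
            Jᶜ.filter (fun v' => v' ≤ w) := by
          intro x hx
          simp only [Finset.mem_filter, Finset.mem_univ, true_and] at hx ⊢
          exact ⟨hup t x hx.2 ht.1, hx.1⟩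
        have hle : (∑ v' ∈ univ.filter (fun v' => v' ≤ w ∧ t ≤ v'), d v')
            ≤ ∑ v' ∈ Jᶜ.filter (fun v' => v' ≤ w), d v' :=
          Finset.sum_le_sum_of_subset_of_nonneg hsub2 (fun i _ _ => (hd i).le)
        exact div_le_div_of_nonneg_left (hc w) (by positivity)
          (pow_le_pow_left₀ hden2pos.le hle 2)
    _ ≤ ∑ w ∈ univ.filter (fun w => t ≤ w),
        c w / (∑ v' ∈ univ.filter (fun v' => v' ≤ w ∧ t ≤ v'), d v') ^ 2 := by
        apply Finset.sum_le_sum_of_subset_of_nonneg hsub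
        intro w _ _
        apply div_nonneg (hc w)
        positivity
end

section
/- For every subset S ⊆ V and every nonnegative b : V → ℝ, one has (Σ_{v ∈ S} d_v (Σ_{w ∈ D(v)} b_w²)^{1/2})² ≥ Σ_{w ∈ V} (Σ_{v ∈ A(w) ∩ S} d_v)² b_w². (This is the lower bound on the squared structured norm proved in the appendix, using that for v, v' ∈ S, ‖Δ_{D(v)}‖ ‖Δ_{D(v')}‖ ≥ ‖Δ_{D(v) ∩ D(v')}‖².) -/
open Finset

/-- Lower bound on the squared structured norm:
`(∑_{v ∈ S} d_v ‖b_{D(v)}‖)² ≥ ∑_{w ∈ V} (∑_{v ∈ A(w) ∩ S} d_v)² b_w²`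
for any nonnegative `b`. -/
theorem stmt10 {V : Type*} [Fintype V] [PartialOrder V] [DecidableEq V]
    [DecidableRel ((· ≤ ·) : V → V → Prop)]
    (d : V → ℝ) (hd : ∀ v, 0 < d v)
    (S : Finset V) (b : V → ℝ) (hb : ∀ w, 0 ≤ b w) :
    ∑ w, (∑ v ∈ S.filter (fun v => v ≤ w), d v) ^ 2 * (b w) ^ 2 ≤
      (∑ v ∈ S, d v * Real.sqrt (∑ w ∈ univ.filter (fun w => v ≤ w), (b w) ^ 2)) ^ 2 := by
  set A : V → ℝ := fun v => ∑ w ∈ univ.filter (fun w => v ≤ w), (b w) ^ 2 with hA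
  have hAnn : ∀ v, 0 ≤ A v := fun v => Finset.sum_nonneg fun w _ => sq_nonneg _
  have hL : ∑ w, (∑ v ∈ S.filter (fun v => v ≤ w), d v) ^ 2 * (b w) ^ 2
      = ∑ v ∈ S, ∑ v' ∈ S, d v * d v' *
          ∑ w ∈ univ.filter (fun w => v ≤ w ∧ v' ≤ w), (b w) ^ 2 := by
    simp only [sq, Finset.sum_mul_sum, Finset.sum_filter, Finset.mul_sum, Finset.sum_mul]
    rw [Finset.sum_comm]
    refine Finset.sum_congr rfl fun v _ => ?_
    rw [Finset.sum_comm]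
    refine Finset.sum_congr rfl fun v' _ => ?_
    refine Finset.sum_congr rfl fun w _ => ?_
    simp only [ite_and]
    split_ifs <;> ring
  rw [hL, sq, Finset.sum_mul_sum]
  refine Finset.sum_le_sum fun v _ => Finset.sum_le_sum fun v' _ => ?_
  have key : ∑ w ∈ univ.filter (fun w => v ≤ w ∧ v' ≤ w), (b w) ^ 2
      ≤ Real.sqrt (A v) * Real.sqrt (A v') := by
    set X := ∑ w ∈ univ.filter (fun w => v ≤ w ∧ v' ≤ w), (b w) ^ 2 with hX
    have hXnn : 0 ≤ X := Finset.sum_nonneg fun w _ => sq_nonneg _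
    have h1 : X ≤ A v := Finset.sum_le_sum_of_subset_of_nonneg
      (by intro w hw; simp only [mem_filter] at hw ⊢; exact ⟨hw.1, hw.2.1⟩)
      (fun w _ _ => sq_nonneg _)
    have h2 : X ≤ A v' := Finset.sum_le_sum_of_subset_of_nonneg
      (by intro w hw; simp only [mem_filter] at hw ⊢; exact ⟨hw.1, hw.2.2⟩)
      (fun w _ _ => sq_nonneg _)
    calc X = Real.sqrt X * Real.sqrt X := (Real.mul_self_sqrt hXnn).symm
      _ ≤ Real.sqrt (A v) * Real.sqrt (A v') :=
        mul_le_mul (Real.sqrt_le_sqrt h1) (Real.sqrt_le_sqrt h2)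
          (Real.sqrt_nonneg _) (Real.sqrt_nonneg _)
  calc d v * d v' * ∑ w ∈ univ.filter (fun w => v ≤ w ∧ v' ≤ w), (b w) ^ 2
      ≤ d v * d v' * (Real.sqrt (A v) * Real.sqrt (A v')) := by
        exact mul_le_mul_of_nonneg_left key (mul_nonneg (hd v).le (hd v').le)
    _ = d v * Real.sqrt (A v) * (d v' * Real.sqrt (A v')) := by ring
end

section
/- Let V be a finite set, r ∈ V a root, π : V \ {r} → V a parent map making (V, r, π) a rooted tree, and d : V → ℝ strictly positive weights. Then the set { ζ : V → ℝ : ζ_v > 0 for all v ∈ V, ζ_v < ζ_{π(v)} for all v ≠ r, and d_r² ζ_r + Σ_{v ≠ r} d_v² ( ζ_v + ζ_v² / (ζ_{π(v)} − ζ_v) ) ≤ 1 } is a convex subset of ℝ^V. (This is the appendix claim that, when the DAG is a tree, the set Z of admissible kernel-weight vectors ζ is convex; it relies on the joint convexity of (x, y) ↦ y²/(x − y) on {x > y}.) -/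
open Finset

lemma conv_pos (a b x y : ℝ) (ha : 0 ≤ a) (hb : 0 ≤ b) (hab : a + b = 1)
    (hx : 0 < x) (hy : 0 < y) : 0 < a * x + b * y := by
  rcases ha.lt_or_eq with h | h
  · nlinarith
  · have : b = 1 := by linarith
    nlinarith

lemma key_ineq (a b q₁ q₂ u₁ u₂ : ℝ) (ha : 0 ≤ a) (hb : 0 ≤ b) (hab : a + b = 1)
    (hu₁ : 0 < u₁) (hu₂ : 0 < u₂) :
    (a * q₁ + b * q₂) ^ 2 / (a * u₁ + b * u₂) ≤ a * (q₁ ^ 2 / u₁) + b * (q₂ ^ 2 / u₂) := by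
  have hden : 0 < a * u₁ + b * u₂ := conv_pos a b _ _ ha hb hab hu₁ hu₂
  rw [div_le_iff₀ hden]
  have hs₁ : q₁ ^ 2 / u₁ * u₁ = q₁ ^ 2 := div_mul_cancel₀ _ (ne_of_gt hu₁)
  have hs₂ : q₂ ^ 2 / u₂ * u₂ = q₂ ^ 2 := div_mul_cancel₀ _ (ne_of_gt hu₂)
  set s₁ := q₁ ^ 2 / u₁
  set s₂ := q₂ ^ 2 / u₂
  have hmid : 2 * q₁ * q₂ ≤ s₁ * u₂ + s₂ * u₁ := by
    rw [← mul_le_mul_iff_of_pos_right (mul_pos hu₁ hu₂)]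
    have e₁ : s₁ * u₁ * u₂ ^ 2 = q₁ ^ 2 * u₂ ^ 2 := by rw [hs₁]
    have e₂ : s₂ * u₂ * u₁ ^ 2 = q₂ ^ 2 * u₁ ^ 2 := by rw [hs₂]
    nlinarith [sq_nonneg (q₁ * u₂ - q₂ * u₁), e₁, e₂]
  nlinarith [mul_nonneg ha hb, hmid, hs₁, hs₂, sq_nonneg a, sq_nonneg b]

/-- When the DAG is a rooted tree, the set `Z` of admissible kernel-weight
vectors `ζ`, described by `ζ > 0`, `ζ_v < ζ_{π(v)}` for `v ≠ r`, and
`d_r² ζ_r + ∑_{v ≠ r} d_v² (ζ_v + ζ_v²/(ζ_{π(v)} − ζ_v)) ≤ 1`, is convex. -/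
theorem stmt14 {V : Type*} [Fintype V] [DecidableEq V] (r : V) (π : V → V)
    (hπr : π r = r) (hreach : ∀ v, ∃ k : ℕ, π^[k] v = r)
    (d : V → ℝ) (hd : ∀ v, 0 < d v) :
    Convex ℝ {ζ : V → ℝ | (∀ v, 0 < ζ v) ∧ (∀ v, v ≠ r → ζ v < ζ (π v)) ∧
      (d r) ^ 2 * ζ r + ∑ v ∈ univ.filter (fun v => v ≠ r),
        (d v) ^ 2 * (ζ v + (ζ v) ^ 2 / (ζ (π v) - ζ v)) ≤ 1} := by
  rintro ζ₁ ⟨h1pos, h1lt, h1sum⟩ ζ₂ ⟨h2pos, h2lt, h2sum⟩ a b ha hb hab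
  have hval : ∀ v, (a • ζ₁ + b • ζ₂) v = a * ζ₁ v + b * ζ₂ v := fun v => rfl
  refine ⟨fun v => ?_, fun v hv => ?_, ?_⟩
  · rw [hval]; exact conv_pos a b _ _ ha hb hab (h1pos v) (h2pos v)
  · rw [hval, hval]
    have := conv_pos a b _ _ ha hb hab (sub_pos.mpr (h1lt v hv)) (sub_pos.mpr (h2lt v hv))
    nlinarith
  · have hterm : ∀ v ∈ univ.filter (fun v => v ≠ r),
        (d v) ^ 2 * ((a • ζ₁ + b • ζ₂) v + ((a • ζ₁ + b • ζ₂) v) ^ 2 /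
          ((a • ζ₁ + b • ζ₂) (π v) - (a • ζ₁ + b • ζ₂) v)) ≤
        a * ((d v) ^ 2 * (ζ₁ v + (ζ₁ v) ^ 2 / (ζ₁ (π v) - ζ₁ v))) +
        b * ((d v) ^ 2 * (ζ₂ v + (ζ₂ v) ^ 2 / (ζ₂ (π v) - ζ₂ v))) := by
      intro v hvmem
      have hv : v ≠ r := (mem_filter.mp hvmem).2
      rw [hval, hval]
      have hu₁ : 0 < ζ₁ (π v) - ζ₁ v := sub_pos.mpr (h1lt v hv)
      have hu₂ : 0 < ζ₂ (π v) - ζ₂ v := sub_pos.mpr (h2lt v hv)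
      have key := key_ineq a b (ζ₁ v) (ζ₂ v) _ _ ha hb hab hu₁ hu₂
      have heq : a * ζ₁ (π v) + b * ζ₂ (π v) - (a * ζ₁ v + b * ζ₂ v)
          = a * (ζ₁ (π v) - ζ₁ v) + b * (ζ₂ (π v) - ζ₂ v) := by ring
      rw [heq]
      have hd2 : (0:ℝ) ≤ (d v) ^ 2 := sq_nonneg _
      nlinarith [key]
    calc (d r) ^ 2 * ((a • ζ₁ + b • ζ₂) r) + ∑ v ∈ univ.filter (fun v => v ≠ r),
          (d v) ^ 2 * ((a • ζ₁ + b • ζ₂) v + ((a • ζ₁ + b • ζ₂) v) ^ 2 /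
            ((a • ζ₁ + b • ζ₂) (π v) - (a • ζ₁ + b • ζ₂) v))
        ≤ (d r) ^ 2 * (a * ζ₁ r + b * ζ₂ r) + ∑ v ∈ univ.filter (fun v => v ≠ r),
          (a * ((d v) ^ 2 * (ζ₁ v + (ζ₁ v) ^ 2 / (ζ₁ (π v) - ζ₁ v))) +
           b * ((d v) ^ 2 * (ζ₂ v + (ζ₂ v) ^ 2 / (ζ₂ (π v) - ζ₂ v)))) := by
          rw [hval]
          exact add_le_add le_rfl (Finset.sum_le_sum hterm)
      _ = a * ((d r) ^ 2 * ζ₁ r + ∑ v ∈ univ.filter (fun v => v ≠ r),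
            (d v) ^ 2 * (ζ₁ v + (ζ₁ v) ^ 2 / (ζ₁ (π v) - ζ₁ v))) +
          b * ((d r) ^ 2 * ζ₂ r + ∑ v ∈ univ.filter (fun v => v ≠ r),
            (d v) ^ 2 * (ζ₂ v + (ζ₂ v) ^ 2 / (ζ₂ (π v) - ζ₂ v))) := by
          rw [Finset.sum_add_distrib, ← Finset.mul_sum, ← Finset.mul_sum]; ring
      _ ≤ a * 1 + b * 1 := add_le_add (mul_le_mul_of_nonneg_left h1sum ha)
            (mul_le_mul_of_nonneg_left h2sum hb)
      _ = 1 := by linarith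
end

section
/- Let y ∈ {−1, 1} and let b ∈ ℝ be such that b·y ∈ (−1, 0). Then the Fenchel conjugate of the logistic loss satisfies sup_{a ∈ ℝ} ( a·b − log(1 + exp(−y·a)) ) = (1 + b·y) · log(1 + b·y) − b·y · log(−b·y). -/
/-- Fenchel conjugate of the logistic loss: for `y ∈ {−1, 1}` and `by ∈ (−1, 0)`,
`sup_a (ab − log(1 + e^{−ya})) = (1 + by) log(1 + by) − by log(−by)`. -/
theorem stmt15 (y b : ℝ) (hy : y = -1 ∨ y = 1)
    (hby : b * y ∈ Set.Ioo (-1 : ℝ) 0) :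
    (⨆ a : ℝ, (a * b - Real.log (1 + Real.exp (-(y * a))))) =
      (1 + b * y) * Real.log (1 + b * y) - b * y * Real.log (-(b * y)) := by
  obtain ⟨hb1, hb2⟩ := hby
  have hyy : y * y = 1 := by rcases hy with h | h <;> rw [h] <;> norm_num
  set t : ℝ := b * y with ht
  set p : ℝ := -t with hpdef
  set q : ℝ := 1 + t with hqdef
  have hp : 0 < p := by simp only [hpdef]; linarith
  have hq : 0 < q := by simp only [hqdef]; linarith
  have hpq : p + q = 1 := by simp only [hpdef, hqdef]; ring
  set M : ℝ := q * Real.log q + p * Real.log p with hM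
  -- key pointwise bound
  have key : ∀ u : ℝ, u * t - Real.log (1 + Real.exp (-u)) ≤ M := by
    intro u
    set x : ℝ := Real.exp (-u) with hxdef
    have hx : 0 < x := Real.exp_pos _
    have h1x : 0 < 1 + x := by linarith
    have amgm := Real.geom_mean_le_arith_mean2_weighted hp.le hq.le
      (div_nonneg hx.le hp.le) (by positivity : (0:ℝ) ≤ 1/q) hpq
    have hrhs : p * (x / p) + q * (1 / q) = 1 + x := by field_simp; ring
    rw [hrhs] at amgm
    have hlog : Real.log ((x / p) ^ p * (1 / q) ^ q) ≤ Real.log (1 + x) :=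
      Real.log_le_log (by positivity) amgm
    rw [Real.log_mul (by positivity) (by positivity),
      Real.log_rpow (by positivity), Real.log_rpow (by positivity),
      Real.log_div (ne_of_gt hx) (ne_of_gt hp),
      Real.log_div one_ne_zero (ne_of_gt hq), Real.log_one] at hlog
    have hlx : Real.log x = -u := Real.log_exp _
    rw [hlx] at hlog
    have hut : u * t = -(p * u) := by simp only [hpdef]; ring
    rw [hM, hut]
    linarith
  -- the bound on the actual function
  have bound : ∀ a : ℝ, a * b - Real.log (1 + Real.exp (-(y * a))) ≤ M := by
    intro a
    have := key (y * a)
    have hab : y * a * t = a * b := by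
      have h : y * a * t = a * b * (y * y) := by rw [ht]; ring
      rw [h, hyy, mul_one]
    rw [hab] at this
    exact this
  have hbdd : BddAbove (Set.range fun a : ℝ => a * b - Real.log (1 + Real.exp (-(y * a)))) := by
    refine ⟨M, ?_⟩
    rintro _ ⟨a, rfl⟩
    exact bound a
  -- the witness attaining the bound
  have hwit : ∃ a : ℝ, a * b - Real.log (1 + Real.exp (-(y * a))) = M := by
    refine ⟨y * Real.log (q / p), ?_⟩
    have hya : y * (y * Real.log (q / p)) = Real.log (q / p) := by
      rw [← mul_assoc, hyy, one_mul]
    rw [hya]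
    have hexp : Real.exp (-Real.log (q / p)) = p / q := by
      rw [← Real.log_inv, Real.exp_log (by positivity)]
      rw [inv_div]
    rw [hexp]
    have h1 : 1 + p / q = 1 / q := by field_simp; linarith
    rw [h1, Real.log_div one_ne_zero (ne_of_gt hq), Real.log_one,
      Real.log_div (ne_of_gt hq) (ne_of_gt hp)]
    have hab : y * Real.log (q / p) * b = Real.log (q / p) * t := by
      simp only [ht]; ring
    rw [Real.log_div (ne_of_gt hq) (ne_of_gt hp)] at hab
    rw [hab]
    have hteq : t = -p := by simp only [hpdef]; ring
    rw [hM, hteq]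
    linear_combination (-(Real.log q)) * hpq
  obtain ⟨a₀, ha₀⟩ := hwit
  have hsup : (⨆ a : ℝ, (a * b - Real.log (1 + Real.exp (-(y * a))))) = M := by
    apply le_antisymm
    · exact ciSup_le bound
    · rw [← ha₀]
      exact le_ciSup hbdd a₀
  rw [hsup, hM]
  simp only [hqdef, hpdef, ht]
  ring
end
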